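/- Let G' and G'' be finitely generated groups with finite symmetric generating sets S' and S'' each containing the identity, and let X_n' and X_n'' be symmetric, finitely supported random walks on G' and G'' (step supports generating the groups). Suppose f, h : [1,∞) → (0,∞) satisfy h(n) ≼ f(n) ≼ √(n·h(n)/log(n+1)), and that E|X_n'| ≍ f(n), H(X_n') ≍ f(n)²·log(n+1)/n, and E|X_n''| ≍ H(X_n'') ≍ h(n). Then the product walk X_n = (X_n', X_n'') on G' × G'' (step distribution μ' ⊗ μ'', word length with respect to the generating set S' × S'') satisfies E|X_n| ≍ f(n) and H(X_n) ≍ h(n). -/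

import Mathlib

/-! The two coordinates of the product walk are independent, so
`(μ' ⊗ μ'')^{*n} = μ'^{*n} ⊗ μ''^{*n}` and entropy is additive: `H(X_n) = H(X_n') + H(X_n'')`. Since `1 ∈ S'` and `1 ∈ S''`, the word
length on `G' × G''` satisfies `|g'| ≤ |(g', g'')| ≤ |g'| + |g''|`, hence
`E|X_n'| ≤ E|X_n| ≤ E|X_n'| + E|X_n''|`, which is `≍ f` because `h ≼ f`. Squaring
`f ≼ √(n h / log (n + 1))` gives `f² log (n + 1) / n ≼ h`, so `H(X_n) ≍ h`. -/

open scoped BigOperators Classical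

/-- Convolution of two measures (given as weight functions) on a group. -/
noncomputable def conv {G : Type*} [Group G] (μ ν : G → ℝ) : G → ℝ :=
  fun g => ∑' h, μ h * ν (h⁻¹ * g)

/-- The `n`-fold convolution power of `μ`; `convPow μ n` is the distribution of `X_n`. -/
noncomputable def convPow {G : Type*} [Group G] (μ : G → ℝ) : ℕ → G → ℝ
  | 0 => fun g => if g = 1 then 1 else 0
  | n + 1 => conv (convPow μ n) μ

/-- Shannon entropy of a measure on a countable group:
`H(μ) = -∑ μ(g) log μ(g)` (with `0 log 0 = 0`). -/
noncomputable def entropy {G : Type*} (μ : G → ℝ) : ℝ :=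
  ∑' g, Real.negMulLog (μ g)

/-- Word length with respect to a generating set `S`. -/
noncomputable def wordLength {G : Type*} [Group G] (S : Set G) (g : G) : ℕ :=
  sInf {n | ∃ l : List G, l.length = n ∧ (∀ x ∈ l, x ∈ S) ∧ l.prod = g}

/-- Rate of escape: `E|X_n| = ∑ μ^{*n}(g) |g|`. -/
noncomputable def speed {G : Type*} [Group G] (S : Set G) (μ : G → ℝ) (n : ℕ) : ℝ :=
  ∑' g, convPow μ n g * (wordLength S g : ℝ)

/-- `μ` is a symmetric, finitely supported probability measure whose support generates `G`. -/
structure IsStepDist {G : Type*} [Group G] (μ : G → ℝ) : Prop where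
  nonneg : ∀ g, 0 ≤ μ g
  total : ∑' g, μ g = 1
  symm : ∀ g, μ g⁻¹ = μ g
  finSupp : (Function.support μ).Finite
  gen : Subgroup.closure (Function.support μ) = ⊤

/-- `S` is a finite symmetric generating set of `G`. -/
structure IsGenSet {G : Type*} [Group G] (S : Set G) : Prop where
  finite : S.Finite
  symm : ∀ s ∈ S, s⁻¹ ∈ S
  gen : Subgroup.closure S = ⊤

open Function
open scoped Pointwise

section Tensor

variable {α β : Type*}

def tensor (μ : α → ℝ) (ν : β → ℝ) : α × β → ℝ := fun p => μ p.1 * ν p.2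

lemma support_tensor_subset (μ : α → ℝ) (ν : β → ℝ) :
    support (tensor μ ν) ⊆ support μ ×ˢ support ν :=
  fun _ hp => ⟨left_ne_zero_of_mul hp, right_ne_zero_of_mul hp⟩

lemma finite_support_tensor {μ : α → ℝ} {ν : β → ℝ} (hμ : (support μ).Finite)
    (hν : (support ν).Finite) : (support (tensor μ ν)).Finite :=
  (hμ.prod hν).subset (support_tensor_subset μ ν)

lemma summable_tensor_mul {μ : α → ℝ} {ν : β → ℝ} (hμ : (support μ).Finite)
    (hν : (support ν).Finite) (φ : α × β → ℝ) : Summable fun p => tensor μ ν p * φ p :=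
  summable_of_hasFiniteSupport <|
    (finite_support_tensor hμ hν).subset (support_mul_subset_left _ _)

lemma tsum_tensor {μ : α → ℝ} {ν : β → ℝ} (hμ : (support μ).Finite)
    (hν : (support ν).Finite) : ∑' p, tensor μ ν p = (∑' a, μ a) * ∑' b, ν b :=
  ((summable_of_hasFiniteSupport hμ).tsum_mul_tsum (summable_of_hasFiniteSupport hν)
    (summable_of_hasFiniteSupport (finite_support_tensor hμ hν))).symm

lemma tsum_tensor_mul_fst {μ : α → ℝ} {ν : β → ℝ} (hμ : (support μ).Finite)
    (hν : (support ν).Finite) (φ : α → ℝ) :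
    ∑' p, tensor μ ν p * φ p.1 = (∑' a, μ a * φ a) * ∑' b, ν b := by
  have hμφ : (support fun a => μ a * φ a).Finite := hμ.subset (support_mul_subset_left _ _)
  rw [← tsum_tensor hμφ hν]
  exact tsum_congr fun p => mul_right_comm _ _ _

lemma tsum_tensor_mul_snd {μ : α → ℝ} {ν : β → ℝ} (hμ : (support μ).Finite)
    (hν : (support ν).Finite) (φ : β → ℝ) :
    ∑' p, tensor μ ν p * φ p.2 = (∑' a, μ a) * ∑' b, ν b * φ b := by
  have hνφ : (support fun b => ν b * φ b).Finite := hν.subset (support_mul_subset_left _ _)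
  rw [← tsum_tensor hμ hνφ]
  exact tsum_congr fun p => mul_assoc _ _ _

lemma entropy_tensor {ρ : α → ℝ} {σ : β → ℝ} (hρ : (support ρ).Finite)
    (hσ : (support σ).Finite) (hρ1 : ∑' a, ρ a = 1) (hσ1 : ∑' b, σ b = 1) :
    entropy (tensor ρ σ) = entropy ρ + entropy σ := by
  have hρH : (support fun a => Real.negMulLog (ρ a)).Finite :=
    HasFiniteSupport.comp hρ Real.negMulLog_zero
  have hσH : (support fun b => Real.negMulLog (σ b)).Finite :=
    HasFiniteSupport.comp hσ Real.negMulLog_zero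
  calc entropy (tensor ρ σ)
      = ∑' p, (tensor (fun a => Real.negMulLog (ρ a)) σ p +
          tensor ρ (fun b => Real.negMulLog (σ b)) p) :=
        tsum_congr fun p => Real.negMulLog_mul _ _ |>.trans (by rw [mul_comm]; rfl)
    _ = entropy ρ + entropy σ := by
        rw [(summable_of_hasFiniteSupport (finite_support_tensor hρH hσ)).tsum_add
          (summable_of_hasFiniteSupport (finite_support_tensor hρ hσH)),
          tsum_tensor hρH hσ, tsum_tensor hρ hσH, hρ1, hσ1, mul_one, one_mul]
        rfl

end Tensor

structure IsFinProb {α : Type*} (μ : α → ℝ) : Prop where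
  nonneg : ∀ a, 0 ≤ μ a
  tsum_eq_one : ∑' a, μ a = 1
  finite_support : (support μ).Finite

namespace IsFinProb

variable {α β : Type*} {μ : α → ℝ}

lemma le_one (hμ : IsFinProb μ) (a : α) : μ a ≤ 1 :=
  hμ.tsum_eq_one ▸ (summable_of_hasFiniteSupport hμ.finite_support).le_tsum a
    fun b _ => hμ.nonneg b

lemma entropy_nonneg (hμ : IsFinProb μ) : 0 ≤ entropy μ :=
  tsum_nonneg fun a => Real.negMulLog_nonneg (hμ.nonneg a) (hμ.le_one a)

lemma tensor {ν : β → ℝ} (hμ : IsFinProb μ) (hν : IsFinProb ν) : IsFinProb (tensor μ ν) where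
  nonneg p := mul_nonneg (hμ.nonneg p.1) (hν.nonneg p.2)
  tsum_eq_one := by
    rw [tsum_tensor hμ.finite_support hν.finite_support, hμ.tsum_eq_one, hν.tsum_eq_one, one_mul]
  finite_support := finite_support_tensor hμ.finite_support hν.finite_support

end IsFinProb

lemma IsStepDist.isFinProb {G : Type*} [Group G] {μ : G → ℝ} (hμ : IsStepDist μ) : IsFinProb μ :=
  ⟨hμ.nonneg, hμ.total, hμ.finSupp⟩

section Convolution

variable {G : Type*} [Group G]

lemma support_conv_subset (ν μ : G → ℝ) : support (conv ν μ) ⊆ support ν * support μ := by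
  intro g hg
  obtain ⟨h, hh⟩ : ∃ h, ν h * μ (h⁻¹ * g) ≠ 0 := by
    by_contra! H
    exact hg (by simp [conv, H])
  exact ⟨h, left_ne_zero_of_mul hh, h⁻¹ * g, right_ne_zero_of_mul hh, mul_inv_cancel_left h g⟩

lemma finite_support_convPow {μ : G → ℝ} (hμ : (support μ).Finite) :
    ∀ n, (support (convPow μ n)).Finite
  | 0 => (Set.finite_singleton 1).subset fun _ hg => by_contra fun h1 => hg (if_neg h1)
  | n + 1 => ((finite_support_convPow hμ n).mul hμ).subset (support_conv_subset _ _)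

lemma tsum_conv {ν μ : G → ℝ} (hν : (support ν).Finite) (hμ : (support μ).Finite) :
    ∑' g, conv ν μ g = (∑' g, ν g) * ∑' g, μ g := by
  have hsum : Summable (uncurry fun h g => ν h * μ (h⁻¹ * g)) := by
    refine summable_of_hasFiniteSupport <|
      ((hν.prod hμ).image fun p : G × G => (p.1, p.1 * p.2)).subset fun p hp => ?_
    exact ⟨(p.1, p.1⁻¹ * p.2), ⟨left_ne_zero_of_mul hp, right_ne_zero_of_mul hp⟩, by simp⟩
  calc ∑' g, conv ν μ g = ∑' h, ∑' g, ν h * μ (h⁻¹ * g) := hsum.tsum_comm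
    _ = ∑' h, ν h * ∑' g, μ g := by
        refine tsum_congr fun h => ?_
        rw [tsum_mul_left, ← (Equiv.mulLeft h).tsum_eq]
        simp
    _ = (∑' g, ν g) * ∑' g, μ g := tsum_mul_right

lemma conv_tensor {H : Type*} [Group H] {ν : G → ℝ} {ν' : H → ℝ} (hν : (support ν).Finite)
    (hν' : (support ν').Finite) (μ : G → ℝ) (μ' : H → ℝ) :
    conv (tensor ν ν') (tensor μ μ') = tensor (conv ν μ) (conv ν' μ') := by
  funext g
  have hφ : (support fun a => ν a * μ (a⁻¹ * g.1)).Finite :=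
    hν.subset (support_mul_subset_left _ _)
  have hφ' : (support fun b => ν' b * μ' (b⁻¹ * g.2)).Finite :=
    hν'.subset (support_mul_subset_left _ _)
  refine (tsum_congr fun p => ?_).trans (tsum_tensor hφ hφ')
  simp only [tensor, Prod.fst_mul, Prod.snd_mul, Prod.fst_inv, Prod.snd_inv]
  ring

lemma convPow_tensor {H : Type*} [Group H] {μ : G → ℝ} {μ' : H → ℝ} (hμ : (support μ).Finite)
    (hμ' : (support μ').Finite) :
    ∀ n, convPow (tensor μ μ') n = tensor (convPow μ n) (convPow μ' n)
  | 0 => by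
    funext g
    simp only [convPow, tensor, Prod.ext_iff, Prod.fst_one, Prod.snd_one]
    split_ifs <;> simp_all
  | n + 1 => by
    rw [convPow, convPow_tensor hμ hμ' n,
      conv_tensor (finite_support_convPow hμ n) (finite_support_convPow hμ' n)]
    rfl

namespace IsFinProb

lemma conv {ν μ : G → ℝ} (hν : IsFinProb ν) (hμ : IsFinProb μ) : IsFinProb (conv ν μ) where
  nonneg _ := tsum_nonneg fun h => mul_nonneg (hν.nonneg h) (hμ.nonneg _)
  tsum_eq_one := by
    rw [tsum_conv hν.finite_support hμ.finite_support, hν.tsum_eq_one, hμ.tsum_eq_one, one_mul]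
  finite_support := (hν.finite_support.mul hμ.finite_support).subset (support_conv_subset _ _)

lemma convPow {μ : G → ℝ} (hμ : IsFinProb μ) : ∀ n, IsFinProb (convPow μ n)
  | 0 => {
      nonneg := fun g => by simp only [_root_.convPow]; split_ifs <;> norm_num
      tsum_eq_one := by simp [_root_.convPow]
      finite_support := finite_support_convPow hμ.finite_support 0 }
  | n + 1 => (IsFinProb.convPow hμ n).conv hμ

end IsFinProb

end Convolution

section WordLength

variable {G H : Type*} [Group G] [Group H] {S : Set G} {T : Set H}

lemma wordLength_le_length (l : List G) (hl : ∀ x ∈ l, x ∈ S) : wordLength S l.prod ≤ l.length :=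
  Nat.sInf_le ⟨l, rfl, hl, rfl⟩

lemma exists_list_length_eq_wordLength (hS : Submonoid.closure S = ⊤) (g : G) :
    ∃ l : List G, l.length = wordLength S g ∧ (∀ x ∈ l, x ∈ S) ∧ l.prod = g := by
  obtain ⟨l, hl, rfl⟩ := Submonoid.exists_list_of_mem_closure (hS ▸ Submonoid.mem_top g)
  have hne : {n | ∃ l' : List G, l'.length = n ∧ (∀ x ∈ l', x ∈ S) ∧ l'.prod = l.prod}.Nonempty :=
    ⟨l.length, l, rfl, hl, rfl⟩
  exact Nat.sInf_mem hne

lemma wordLength_mul_le (hS : Submonoid.closure S = ⊤) (g g' : G) :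
    wordLength S (g * g') ≤ wordLength S g + wordLength S g' := by
  obtain ⟨l, hlen, hl, rfl⟩ := exists_list_length_eq_wordLength hS g
  obtain ⟨l', hlen', hl', rfl⟩ := exists_list_length_eq_wordLength hS g'
  rw [← hlen, ← hlen', ← List.length_append, ← List.prod_append]
  exact wordLength_le_length _ fun x hx => (List.mem_append.1 hx).elim (hl x) (hl' x)

lemma wordLength_map_le (hS : Submonoid.closure S = ⊤) (φ : G →* H) (hφ : ∀ x ∈ S, φ x ∈ T)
    (g : G) : wordLength T (φ g) ≤ wordLength S g := by
  obtain ⟨l, hlen, hl, rfl⟩ := exists_list_length_eq_wordLength hS g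
  rw [← hlen, ← List.length_map φ, map_list_prod]
  exact wordLength_le_length _ fun y hy => by
    obtain ⟨x, hx, rfl⟩ := List.mem_map.1 hy
    exact hφ x (hl x hx)

lemma IsGenSet.submonoid_closure_eq_top (hS : IsGenSet S) : Submonoid.closure S = ⊤ := by
  rw [← Subgroup.top_toSubmonoid, ← hS.gen, Subgroup.closure_toSubmonoid,
    Set.union_eq_left.2 fun x hx => by simpa using hS.symm _ hx]

lemma submonoid_closure_prod_eq_top (hS : Submonoid.closure S = ⊤) (hT : Submonoid.closure T = ⊤)
    (hS1 : (1 : G) ∈ S) (hT1 : (1 : H) ∈ T) : Submonoid.closure (S ×ˢ T) = ⊤ := by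
  rw [Submonoid.closure_prod hS1 hT1, hS, hT, Submonoid.top_prod_top]

lemma wordLength_prod_le_add (hS : Submonoid.closure S = ⊤) (hT : Submonoid.closure T = ⊤)
    (hS1 : (1 : G) ∈ S) (hT1 : (1 : H) ∈ T) (g : G × H) :
    wordLength (S ×ˢ T) g ≤ wordLength S g.1 + wordLength T g.2 := by
  have hST := submonoid_closure_prod_eq_top hS hT hS1 hT1
  calc wordLength (S ×ˢ T) g
      = wordLength (S ×ˢ T) (MonoidHom.inl G H g.1 * MonoidHom.inr G H g.2) := by simp
    _ ≤ wordLength (S ×ˢ T) (MonoidHom.inl G H g.1) +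
          wordLength (S ×ˢ T) (MonoidHom.inr G H g.2) :=
        wordLength_mul_le hST _ _
    _ ≤ wordLength S g.1 + wordLength T g.2 :=
        add_le_add (wordLength_map_le hS _ (fun _ hx => Set.mk_mem_prod hx hT1) _)
          (wordLength_map_le hT _ (fun _ hx => Set.mk_mem_prod hS1 hx) _)

end WordLength

section ProductWalk

variable {G H : Type*} [Group G] [Group H] {μ : G → ℝ} {ν : H → ℝ}

lemma speed_nonneg (hμ : IsFinProb μ) (S : Set G) (n : ℕ) : 0 ≤ speed S μ n :=
  tsum_nonneg fun g => mul_nonneg ((hμ.convPow n).nonneg g) (Nat.cast_nonneg _)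

lemma speed_le_speed_tensor (hμ : IsFinProb μ) (hν : IsFinProb ν) {S : Set G} {T : Set H}
    (hST : Submonoid.closure (S ×ˢ T) = ⊤) (n : ℕ) :
    speed S μ n ≤ speed (S ×ˢ T) (tensor μ ν) n := by
  have hρ := hμ.convPow n
  have hσ := hν.convPow n
  have hlen (p : G × H) : (wordLength S p.1 : ℝ) ≤ wordLength (S ×ˢ T) p := by
    exact_mod_cast wordLength_map_le hST (MonoidHom.fst G H) (fun _ hx => hx.1) p
  calc speed S μ n
      = ∑' p, tensor (convPow μ n) (convPow ν n) p * wordLength S p.1 := by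
        rw [tsum_tensor_mul_fst hρ.finite_support hσ.finite_support (fun a => (wordLength S a : ℝ)),
          hσ.tsum_eq_one, mul_one, speed]
    _ ≤ ∑' p, tensor (convPow μ n) (convPow ν n) p * wordLength (S ×ˢ T) p :=
        (summable_tensor_mul hρ.finite_support hσ.finite_support _).tsum_le_tsum
          (fun p => mul_le_mul_of_nonneg_left (hlen p) ((hρ.tensor hσ).nonneg p))
          (summable_tensor_mul hρ.finite_support hσ.finite_support _)
    _ = speed (S ×ˢ T) (tensor μ ν) n := by
        rw [speed, convPow_tensor hμ.finite_support hν.finite_support]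

lemma speed_tensor_le_add (hμ : IsFinProb μ) (hν : IsFinProb ν) {S : Set G} {T : Set H}
    (hS : Submonoid.closure S = ⊤) (hT : Submonoid.closure T = ⊤) (hS1 : (1 : G) ∈ S)
    (hT1 : (1 : H) ∈ T) (n : ℕ) :
    speed (S ×ˢ T) (tensor μ ν) n ≤ speed S μ n + speed T ν n := by
  have hρ := hμ.convPow n
  have hσ := hν.convPow n
  have hsum := summable_tensor_mul hρ.finite_support hσ.finite_support
  have hlen (p : G × H) :
      (wordLength (S ×ˢ T) p : ℝ) ≤ wordLength S p.1 + wordLength T p.2 := by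
    exact_mod_cast wordLength_prod_le_add hS hT hS1 hT1 p
  calc speed (S ×ˢ T) (tensor μ ν) n
      = ∑' p, tensor (convPow μ n) (convPow ν n) p * wordLength (S ×ˢ T) p := by
        rw [speed, convPow_tensor hμ.finite_support hν.finite_support]
    _ ≤ ∑' p, (tensor (convPow μ n) (convPow ν n) p * wordLength S p.1 +
          tensor (convPow μ n) (convPow ν n) p * wordLength T p.2) :=
        (hsum _).tsum_le_tsum (fun p => (mul_le_mul_of_nonneg_left (hlen p)
          ((hρ.tensor hσ).nonneg p)).trans_eq (mul_add _ _ _)) ((hsum _).add (hsum _))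
    _ = speed S μ n + speed T ν n := by
        rw [(hsum _).tsum_add (hsum _),
          tsum_tensor_mul_fst hρ.finite_support hσ.finite_support (fun a => (wordLength S a : ℝ)),
          tsum_tensor_mul_snd hρ.finite_support hσ.finite_support (fun b => (wordLength T b : ℝ)),
          hρ.tsum_eq_one, hσ.tsum_eq_one, mul_one, one_mul, speed, speed]

lemma entropy_convPow_tensor (hμ : IsFinProb μ) (hν : IsFinProb ν) (n : ℕ) :
    entropy (convPow (tensor μ ν) n) = entropy (convPow μ n) + entropy (convPow ν n) := by
  have hρ := hμ.convPow n
  have hσ := hν.convPow n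
  rw [convPow_tensor hμ.finite_support hν.finite_support,
    entropy_tensor hρ.finite_support hσ.finite_support hρ.tsum_eq_one hσ.tsum_eq_one]

end ProductWalk

section Asymptotics

-- The paper's `u ≼ v` and `u ≍ v`, with the bounds required for every `n ≥ 1`, not eventually.
def AsympLE (u v : ℕ → ℝ) : Prop :=
  ∃ c : ℝ, 0 < c ∧ ∀ n : ℕ, 1 ≤ n → u n ≤ c * v n

def AsympEquiv (u v : ℕ → ℝ) : Prop :=
  ∃ c : ℝ, 0 < c ∧ ∀ n : ℕ, 1 ≤ n → u n ≤ c * v n ∧ v n ≤ c * u n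

variable {u v w : ℕ → ℝ}

lemma AsympEquiv.asympLE (h : AsympEquiv u v) : AsympLE u v :=
  let ⟨c, hc, huv⟩ := h
  ⟨c, hc, fun n hn => (huv n hn).1⟩

lemma AsympEquiv.asympLE_symm (h : AsympEquiv u v) : AsympLE v u :=
  let ⟨c, hc, huv⟩ := h
  ⟨c, hc, fun n hn => (huv n hn).2⟩

lemma AsympEquiv.of_asympLE (huv : AsympLE u v) (hvu : AsympLE v u)
    (hu : ∀ n : ℕ, 1 ≤ n → 0 ≤ u n) : AsympEquiv u v := by
  obtain ⟨c, hc, huv⟩ := huv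
  obtain ⟨d, -, hvu⟩ := hvu
  refine ⟨max c d, lt_max_of_lt_left hc, fun n hn => ⟨?_, ?_⟩⟩
  · have hv : 0 ≤ v n := nonneg_of_mul_nonneg_right ((hu n hn).trans (huv n hn)) hc
    exact (huv n hn).trans (mul_le_mul_of_nonneg_right (le_max_left c d) hv)
  · exact (hvu n hn).trans (mul_le_mul_of_nonneg_right (le_max_right c d) (hu n hn))

lemma AsympLE.trans (huv : AsympLE u v) (hvw : AsympLE v w) : AsympLE u w := by
  obtain ⟨c, hc, huv⟩ := huv
  obtain ⟨d, hd, hvw⟩ := hvw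
  refine ⟨c * d, mul_pos hc hd, fun n hn => (huv n hn).trans ?_⟩
  rw [mul_assoc]
  exact mul_le_mul_of_nonneg_left (hvw n hn) hc.le

lemma AsympLE.add (hu : AsympLE u w) (hv : AsympLE v w) : AsympLE (fun n => u n + v n) w := by
  obtain ⟨c, hc, hu⟩ := hu
  obtain ⟨d, hd, hv⟩ := hv
  refine ⟨c + d, add_pos hc hd, fun n hn => ?_⟩
  rw [add_mul]
  exact add_le_add (hu n hn) (hv n hn)

lemma AsympLE.mono_left (hvw : AsympLE v w) (huv : ∀ n : ℕ, 1 ≤ n → u n ≤ v n) :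
    AsympLE u w :=
  let ⟨c, hc, hvw⟩ := hvw
  ⟨c, hc, fun n hn => (huv n hn).trans (hvw n hn)⟩

lemma AsympLE.mono_right (huv : AsympLE u v) (hvw : ∀ n : ℕ, 1 ≤ n → v n ≤ w n) :
    AsympLE u w :=
  let ⟨c, hc, huv⟩ := huv
  ⟨c, hc, fun n hn => (huv n hn).trans (mul_le_mul_of_nonneg_left (hvw n hn) hc.le)⟩

end Asymptotics

lemma sq_mul_div_le_of_le_mul_sqrt {a b c x L : ℝ} (ha : 0 < a) (hc : 0 < c) (hx : 0 < x)
    (hL : 0 < L) (h : a ≤ c * √(x * b / L)) : a ^ 2 * L / x ≤ c ^ 2 * b := by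
  have hsq : (a / c) ^ 2 ≤ x * b / L := (Real.le_sqrt' (div_pos ha hc)).1 ((div_le_iff₀' hc).2 h)
  rw [div_pow, div_le_div_iff₀ (by positivity) hL] at hsq
  rw [div_le_iff₀ hx]
  linarith

lemma asympLE_sq_mul_log_div {f h : ℝ → ℝ} (hf : ∀ x : ℝ, 1 ≤ x → 0 < f x) {c : ℝ} (hc : 0 < c)
    (hfh : ∀ x : ℝ, 1 ≤ x → f x ≤ c * √(x * h x / Real.log (x + 1))) :
    AsympLE (fun n : ℕ => f n ^ 2 * Real.log (n + 1) / n) (fun n : ℕ => h n) := by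
  refine ⟨c ^ 2, by positivity, fun n hn => ?_⟩
  have hn' : (1 : ℝ) ≤ n := by exact_mod_cast hn
  exact sq_mul_div_le_of_le_mul_sqrt (hf n hn') hc (by positivity) (Real.log_pos (by linarith))
    (hfh n hn')

theorem product_walk_speed_entropy_general
    (G' G'' : Type*) [Group G'] [Group G'']
    (S' : Set G') (S'' : Set G'') (hS' : IsGenSet S') (hS'' : IsGenSet S'')
    (hone' : (1 : G') ∈ S') (hone'' : (1 : G'') ∈ S'')
    (μ' : G' → ℝ) (μ'' : G'' → ℝ) (hμ' : IsStepDist μ') (hμ'' : IsStepDist μ'')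
    (f h : ℝ → ℝ)
    (hfpos : ∀ x : ℝ, 1 ≤ x → 0 < f x)
    (hrel : ∃ c : ℝ, 0 < c ∧ ∀ n : ℝ, 1 ≤ n →
      h n ≤ c * f n ∧ f n ≤ c * Real.sqrt (n * h n / Real.log (n + 1)))
    (hspeed' : ∃ c : ℝ, 0 < c ∧ ∀ n : ℕ, 1 ≤ n →
      speed S' μ' n ≤ c * f n ∧ f n ≤ c * speed S' μ' n)
    (hent' : ∃ c : ℝ, 0 < c ∧ ∀ n : ℕ, 1 ≤ n →
      entropy (convPow μ' n) ≤ c * (f n ^ 2 * Real.log (n + 1) / n) ∧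
        f n ^ 2 * Real.log (n + 1) / n ≤ c * entropy (convPow μ' n))
    (hspeed'' : ∃ c : ℝ, 0 < c ∧ ∀ n : ℕ, 1 ≤ n →
      speed S'' μ'' n ≤ c * h n ∧ h n ≤ c * speed S'' μ'' n)
    (hent'' : ∃ c : ℝ, 0 < c ∧ ∀ n : ℕ, 1 ≤ n →
      entropy (convPow μ'' n) ≤ c * h n ∧ h n ≤ c * entropy (convPow μ'' n)) :
    (∃ c : ℝ, 0 < c ∧ ∀ n : ℕ, 1 ≤ n →
      speed (S' ×ˢ S'') (fun p : G' × G'' => μ' p.1 * μ'' p.2) n ≤ c * f n ∧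
        f n ≤ c * speed (S' ×ˢ S'') (fun p : G' × G'' => μ' p.1 * μ'' p.2) n) ∧
    (∃ c : ℝ, 0 < c ∧ ∀ n : ℕ, 1 ≤ n →
      entropy (convPow (fun p : G' × G'' => μ' p.1 * μ'' p.2) n) ≤ c * h n ∧
        h n ≤ c * entropy (convPow (fun p : G' × G'' => μ' p.1 * μ'' p.2) n)) := by
  have hspeed' : AsympEquiv (speed S' μ') (fun n : ℕ => f n) := hspeed'
  have hspeed'' : AsympEquiv (speed S'' μ'') (fun n : ℕ => h n) := hspeed''
  have hent' : AsympEquiv (fun n => entropy (convPow μ' n))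
      (fun n : ℕ => f n ^ 2 * Real.log (n + 1) / n) := hent'
  have hent'' : AsympEquiv (fun n => entropy (convPow μ'' n)) (fun n : ℕ => h n) := hent''
  obtain ⟨c, hc, hrel⟩ := hrel
  have hh_le_f : AsympLE (fun n : ℕ => h n) (fun n : ℕ => f n) :=
    ⟨c, hc, fun n hn => (hrel n (by exact_mod_cast hn)).1⟩
  have hq_le_h := asympLE_sq_mul_log_div hfpos hc fun x hx => (hrel x hx).2
  have hgen' := hS'.submonoid_closure_eq_top
  have hgen'' := hS''.submonoid_closure_eq_top
  constructor
  · show AsympEquiv (speed (S' ×ˢ S'') (tensor μ' μ'')) (fun n : ℕ => f n)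
    exact .of_asympLE
      ((hspeed'.asympLE.add (hspeed''.asympLE.trans hh_le_f)).mono_left fun n _ =>
        speed_tensor_le_add hμ'.isFinProb hμ''.isFinProb hgen' hgen'' hone' hone'' n)
      (hspeed'.asympLE_symm.mono_right fun n _ => speed_le_speed_tensor hμ'.isFinProb
        hμ''.isFinProb (submonoid_closure_prod_eq_top hgen' hgen'' hone' hone'') n)
      (fun n _ => speed_nonneg (hμ'.isFinProb.tensor hμ''.isFinProb) _ n)
  · show AsympEquiv (fun n => entropy (convPow (tensor μ' μ'') n)) (fun n : ℕ => h n)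
    simp only [entropy_convPow_tensor hμ'.isFinProb hμ''.isFinProb]
    have hH' n := (hμ'.isFinProb.convPow n).entropy_nonneg
    have hH'' n := (hμ''.isFinProb.convPow n).entropy_nonneg
    exact .of_asympLE ((hent'.asympLE.trans hq_le_h).add hent''.asympLE)
      (hent''.asympLE_symm.mono_right fun n _ => le_add_of_nonneg_left (hH' n))
      (fun n _ => add_nonneg (hH' n) (hH'' n))

/-- Combining the two extreme walks: if `E|X_n'| ≍ f(n)`, `H(X_n') ≍ f(n)² log(n+1)/n`,
`E|X_n''| ≍ H(X_n'') ≍ h(n)`, and `h(n) ≼ f(n) ≼ √(n h(n)/log(n+1))`, then the product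
walk `X_n = (X_n', X_n'')` on `G' × G''` (with word length from the generating set
`S' × S''`) satisfies `E|X_n| ≍ f(n)` and `H(X_n) ≍ h(n)`. -/
theorem product_walk_speed_entropy
    (G' G'' : Type*) [Group G'] [Group G'']
    (S' : Set G') (S'' : Set G'') (hS' : IsGenSet S') (hS'' : IsGenSet S'')
    (hone' : (1 : G') ∈ S') (hone'' : (1 : G'') ∈ S'')
    (μ' : G' → ℝ) (μ'' : G'' → ℝ) (hμ' : IsStepDist μ') (hμ'' : IsStepDist μ'')
    (f h : ℝ → ℝ)
    (hfpos : ∀ x : ℝ, 1 ≤ x → 0 < f x) (hhpos : ∀ x : ℝ, 1 ≤ x → 0 < h x)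
    (hrel : ∃ c : ℝ, 0 < c ∧ ∀ n : ℝ, 1 ≤ n →
      h n ≤ c * f n ∧ f n ≤ c * Real.sqrt (n * h n / Real.log (n + 1)))
    (hspeed' : ∃ c : ℝ, 0 < c ∧ ∀ n : ℕ, 1 ≤ n →
      speed S' μ' n ≤ c * f n ∧ f n ≤ c * speed S' μ' n)
    (hent' : ∃ c : ℝ, 0 < c ∧ ∀ n : ℕ, 1 ≤ n →
      entropy (convPow μ' n) ≤ c * (f n ^ 2 * Real.log (n + 1) / n) ∧
        f n ^ 2 * Real.log (n + 1) / n ≤ c * entropy (convPow μ' n))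
    (hspeed'' : ∃ c : ℝ, 0 < c ∧ ∀ n : ℕ, 1 ≤ n →
      speed S'' μ'' n ≤ c * h n ∧ h n ≤ c * speed S'' μ'' n)
    (hent'' : ∃ c : ℝ, 0 < c ∧ ∀ n : ℕ, 1 ≤ n →
      entropy (convPow μ'' n) ≤ c * h n ∧ h n ≤ c * entropy (convPow μ'' n)) :
    (∃ c : ℝ, 0 < c ∧ ∀ n : ℕ, 1 ≤ n →
      speed (S' ×ˢ S'') (fun p : G' × G'' => μ' p.1 * μ'' p.2) n ≤ c * f n ∧
        f n ≤ c * speed (S' ×ˢ S'') (fun p : G' × G'' => μ' p.1 * μ'' p.2) n) ∧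
    (∃ c : ℝ, 0 < c ∧ ∀ n : ℕ, 1 ≤ n →
      entropy (convPow (fun p : G' × G'' => μ' p.1 * μ'' p.2) n) ≤ c * h n ∧
        h n ≤ c * entropy (convPow (fun p : G' × G'' => μ' p.1 * μ'' p.2) n)) :=
  product_walk_speed_entropy_general G' G'' S' S'' hS' hS'' hone' hone'' μ' μ'' hμ' hμ'' f h hfpos
    hrel hspeed' hent' hspeed'' hent''
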